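/- Let Φ be a reduced irreducible root system in ℝ^d with d ≥ 2, and let L ⊆ ℂ^d be a 2-dimensional ℂ-linear subspace such that L ⊄ ker θ_ℂ for every θ ∈ Φ. Then every fiber Φ_k of the L-induced decomposition satisfies Φ ∩ span_ℝ Φ_k = Φ_k; in particular each Φ_k is a root subsystem of Φ closed under taking negatives. -/

import Mathlib

noncomputable section

/-- The standard inner product on `ℝ^d`. -/
def dotR {d : ℕ} (x y : Fin d → ℝ) : ℝ := ∑ i, x i * y i

/-- `Φ` is a root system in `ℝ^d`: a finite set of nonzero vectors spanning `ℝ^d`,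
closed under the reflections `s_α`, with integral Cartan numbers. -/
def IsRootSystem {d : ℕ} (Φ : Finset (Fin d → ℝ)) : Prop :=
  (∀ α ∈ Φ, α ≠ 0) ∧
  Submodule.span ℝ (Φ : Set (Fin d → ℝ)) = ⊤ ∧
  (∀ α ∈ Φ, ∀ β ∈ Φ, β - (2 * dotR β α / dotR α α) • α ∈ Φ) ∧
  (∀ α ∈ Φ, ∀ β ∈ Φ, ∃ n : ℤ, 2 * dotR β α / dotR α α = (n : ℝ))

/-- `Φ` is reduced: the only multiples of a root `α` in `Φ` are `±α`. -/
def IsReducedRS {d : ℕ} (Φ : Finset (Fin d → ℝ)) : Prop :=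
  ∀ α ∈ Φ, ∀ t : ℝ, t • α ∈ Φ → t = 1 ∨ t = -1

/-- `Φ` is irreducible: it is not the disjoint union of two nonempty mutually
orthogonal subsets. -/
def IsIrreducibleRS {d : ℕ} (Φ : Finset (Fin d → ℝ)) : Prop :=
  ∀ A B : Set (Fin d → ℝ), (Φ : Set (Fin d → ℝ)) = A ∪ B → Disjoint A B →
    (∀ a ∈ A, ∀ b ∈ B, dotR a b = 0) → A = ∅ ∨ B = ∅

/-- The complexification `θ_ℂ : ℂ^d → ℂ` of the linear functional `z ↦ Σ θᵢ zᵢ`. -/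
def thetaC {d : ℕ} (θ : Fin d → ℝ) (z : Fin d → ℂ) : ℂ := ∑ i, (θ i : ℂ) * z i

/-- The kernel of `θ_ℂ`, as a complex subspace of `ℂ^d`. -/
def kerC {d : ℕ} (θ : Fin d → ℝ) : Submodule ℂ (Fin d → ℂ) where
  carrier := {z | thetaC θ z = 0}
  add_mem' := by
    intro a b ha hb
    simp only [Set.mem_setOf_eq, thetaC] at *
    simp [Pi.add_apply, mul_add, Finset.sum_add_distrib, ha, hb]
  zero_mem' := by simp [thetaC]
  smul_mem' := by
    intro c z hz
    simp only [Set.mem_setOf_eq, thetaC] at *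
    have h : ∑ i, (θ i : ℂ) * (c • z) i = c * ∑ i, (θ i : ℂ) * z i := by
      rw [Finset.mul_sum]
      exact Finset.sum_congr rfl (fun i _ => by simp [Pi.smul_apply, smul_eq_mul]; ring)
    rw [h, hz, mul_zero]

/-!
Let `v` span the line `ker θ₀_ℂ ∩ L`. Each `ker θ_ℂ ∩ L` is a line, so a root `θ` lies in the
fiber of `θ₀` exactly when `θ_ℂ(v) = 0`. That condition is `ℝ`-linear in `θ`, hence holds on all
of `span_ℝ Φ_k`, so every root in the span lies in `Φ_k`; in particular `-θ = s_θ(θ)` does.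
-/

open Module Submodule LinearMap

section Hyperplane

variable {K V : Type*} [Field K] [AddCommGroup V] [Module K V] {L : Submodule K V}

theorem finrank_ker_inf_eq_one (hL : finrank K L = 2) {f : Dual K V} (hf : ¬ L ≤ ker f) :
    finrank K ↥(ker f ⊓ L) = 1 := by
  have : FiniteDimensional K L := Module.finite_of_finrank_eq_succ hL
  have hf' : f ∘ₗ L.subtype ≠ 0 := by
    rwa [Ne, ← ker_eq_top, ker_comp, comap_subtype_eq_top]
  have := Dual.finrank_ker_add_one_of_ne_zero hf'
  rw [inf_comm, ← map_comap_subtype, finrank_map_subtype_eq, ← ker_comp]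
  omega

theorem exists_mem_ker_inf_ne_zero (hL : finrank K L = 2) {f : Dual K V} (hf : ¬ L ≤ ker f) :
    ∃ v ∈ ker f ⊓ L, v ≠ 0 :=
  exists_mem_ne_zero_of_ne_bot fun h => by
    have := finrank_ker_inf_eq_one hL hf
    rw [h, finrank_bot] at this
    exact zero_ne_one this

theorem ker_inf_eq_span_singleton (hL : finrank K L = 2) {f : Dual K V} (hf : ¬ L ≤ ker f)
    {v : V} (hv : v ∈ ker f ⊓ L) (hv0 : v ≠ 0) : ker f ⊓ L = K ∙ v := by
  have hrank := finrank_ker_inf_eq_one hL hf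
  have : FiniteDimensional K ↥(ker f ⊓ L) := Module.finite_of_finrank_eq_succ hrank
  refine (eq_of_le_of_finrank_eq ((span_singleton_le_iff_mem _ _).2 hv) ?_).symm
  rw [finrank_span_singleton hv0, hrank]

theorem ker_inf_eq_ker_inf_iff (hL : finrank K L = 2) {f g : Dual K V} (hf : ¬ L ≤ ker f)
    (hg : ¬ L ≤ ker g) {v : V} (hv : v ∈ ker g ⊓ L) (hv0 : v ≠ 0) :
    ker f ⊓ L = ker g ⊓ L ↔ f v = 0 := by
  refine ⟨fun h => (h ▸ hv).1, fun hfv => ?_⟩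
  rw [ker_inf_eq_span_singleton hL hf ⟨hfv, hv.2⟩ hv0, ker_inf_eq_span_singleton hL hg hv hv0]

end Hyperplane

section Complexification

variable {d : ℕ}

def complexPairing : (Fin d → ℝ) →ₗ[ℝ] (Fin d → ℂ) →ₗ[ℂ] ℂ :=
  LinearMap.mk₂' ℝ ℂ thetaC
    (fun θ η z => by
      simp only [thetaC, Pi.add_apply, Complex.ofReal_add, add_mul, Finset.sum_add_distrib])
    (fun c θ z => by
      simp only [thetaC, Pi.smul_apply, smul_eq_mul, Complex.ofReal_mul, Finset.smul_sum,
        Complex.real_smul, mul_assoc])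
    (fun θ z w => by simp only [thetaC, Pi.add_apply, mul_add, Finset.sum_add_distrib])
    (fun c θ z => by simp only [thetaC, Pi.smul_apply, smul_eq_mul, Finset.mul_sum, mul_left_comm])

theorem kerC_eq_ker_complexPairing (θ : Fin d → ℝ) : kerC θ = ker (complexPairing θ) := rfl

end Complexification

theorem IsRootSystem.neg_mem {d : ℕ} {Φ : Finset (Fin d → ℝ)} (hΦ : IsRootSystem Φ)
    {θ : Fin d → ℝ} (hθ : θ ∈ Φ) : -θ ∈ Φ := by
  have hθθ : dotR θ θ ≠ 0 := by
    rw [show dotR θ θ = θ ⬝ᵥ θ from rfl, Ne, dotProduct_self_eq_zero]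
    exact hΦ.1 θ hθ
  have h := hΦ.2.2.1 θ hθ θ hθ
  rwa [mul_div_assoc, div_self hθθ, mul_one, two_smul, sub_add_cancel_left] at h

theorem stmt1 {d : ℕ} (Φ : Finset (Fin d → ℝ))
    (hRS : IsRootSystem Φ)
    (L : Submodule ℂ (Fin d → ℂ)) (hL : Module.finrank ℂ L = 2)
    (hLk : ∀ θ ∈ Φ, ¬ L ≤ kerC θ)
    (θ₀ : Fin d → ℝ) (hθ₀ : θ₀ ∈ Φ)
    (Φk : Set (Fin d → ℝ))
    (hΦk : Φk = {θ : Fin d → ℝ | θ ∈ Φ ∧ kerC θ ⊓ L = kerC θ₀ ⊓ L}) :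
    (Φ : Set (Fin d → ℝ)) ∩ ↑(Submodule.span ℝ Φk) = Φk ∧
    (∀ θ ∈ Φk, -θ ∈ Φk) := by
  simp only [kerC_eq_ker_complexPairing] at hLk hΦk
  obtain ⟨v, hv, hv0⟩ := exists_mem_ker_inf_ne_zero hL (hLk θ₀ hθ₀)
  have mem_Φk_iff : ∀ θ, θ ∈ Φk ↔ θ ∈ Φ ∧ complexPairing.flip v θ = 0 := fun θ => by
    rw [hΦk]
    exact and_congr_right fun hθ => ker_inf_eq_ker_inf_iff hL (hLk θ hθ) (hLk θ₀ hθ₀) hv hv0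
  have span_le_ker : span ℝ Φk ≤ ker (complexPairing.flip v) :=
    span_le.2 fun θ hθ => ((mem_Φk_iff θ).1 hθ).2
  refine ⟨Set.ext fun θ => ⟨fun ⟨hθ, hspan⟩ => (mem_Φk_iff θ).2 ⟨hθ, span_le_ker hspan⟩,
    fun hθ => ⟨((mem_Φk_iff θ).1 hθ).1, subset_span hθ⟩⟩, fun θ hθ => ?_⟩
  rw [mem_Φk_iff] at hθ ⊢
  exact ⟨hRS.neg_mem hθ.1, by rw [map_neg, hθ.2, neg_zero]⟩

end
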